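/- arXiv:2306.01767 — 3 statements merged into one kernel-verified Lean document; each statement's English description precedes it below -/
import Mathlib

section
/- The polynomial $\phi(x) = x^2 - x + 5$ is irreducible modulo $2$ and modulo $3$, and the polynomial $\frac{1}{3}\phi(x)^4 - 3$ is reducible over $\mathbb{Q}$. -/
open Polynomial

/-- `u j` is the product of all odd positive integers `≤ j`. -/
def u (j : ℕ) : ℕ := ∏ i ∈ Finset.filter (fun i => Odd i) (Finset.range (j+1)), i

namespace Polynomial

lemma map_X_sq_sub_X_add_C {R S : Type*} [CommRing R] [CommRing S] (f : R →+* S) (c : R) :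
    (X ^ 2 - X + C c : R[X]).map f = X ^ 2 - X + C (f c) := by
  simp only [Polynomial.map_add, Polynomial.map_sub, Polynomial.map_pow, map_X, map_C]

lemma natDegree_X_sq_sub_X_add_C {R : Type*} [CommRing R] [Nontrivial R] (c : R) :
    (X ^ 2 - X + C c : R[X]).natDegree = 2 := by
  compute_degree!

lemma irreducible_X_sq_sub_X_add_C {K : Type*} [Field K] {c : K}
    (h : ∀ a : K, a ^ 2 - a + c ≠ 0) : Irreducible (X ^ 2 - X + C c : K[X]) := by
  refine irreducible_of_degree_le_three_of_not_isRoot ?_ fun a ha => h a ?_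
  · rw [natDegree_X_sq_sub_X_add_C]; decide
  · simpa using ha

lemma not_irreducible_mul_of_natDegree_pos {R : Type*} [Semiring R] [NoZeroDivisors R]
    {p q : R[X]} (hp : 0 < p.natDegree) (hq : 0 < q.natDegree) : ¬ Irreducible (p * q) := by
  intro hpq
  rcases of_irreducible_mul hpq with hunit | hunit
  · exact hp.ne' (natDegree_eq_zero_of_isUnit hunit)
  · exact hq.ne' (natDegree_eq_zero_of_isUnit hunit)

lemma not_irreducible_C_inv_mul_pow_four_sub_C {K : Type*} [Field K] {q : K[X]}
    (hq : 0 < q.natDegree) {c : K} (hc : c ≠ 0) : ¬ Irreducible (C c⁻¹ * q ^ 4 - C c) := by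
  have hfactor : C c⁻¹ * q ^ 4 - C c = (C c⁻¹ * (q ^ 2 - C c)) * (q ^ 2 + C c) := by
    have hc' : C c⁻¹ * C c ^ 2 = C c := by rw [← C_pow, ← C_mul]; field_simp
    linear_combination hc'
  have hsq : 0 < (q ^ 2).natDegree := by rw [natDegree_pow]; omega
  rw [hfactor]
  refine not_irreducible_mul_of_natDegree_pos ?_ ?_
  · rwa [natDegree_C_mul (inv_ne_zero hc), natDegree_sub_C]
  · rwa [natDegree_add_C]

end Polynomial

theorem stmt_7 :
    Irreducible ((X^2 - X + C 5 : ℤ[X]).map (Int.castRingHom (ZMod 2))) ∧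
    Irreducible ((X^2 - X + C 5 : ℤ[X]).map (Int.castRingHom (ZMod 3))) ∧
    ¬ Irreducible (C (3:ℚ)⁻¹ * ((X^2 - X + C 5 : ℤ[X]).map (Int.castRingHom ℚ))^4 - C 3) := by
  rw [map_X_sq_sub_X_add_C, map_X_sq_sub_X_add_C, map_X_sq_sub_X_add_C]
  refine ⟨irreducible_X_sq_sub_X_add_C (by decide), irreducible_X_sq_sub_X_add_C (by decide), ?_⟩
  exact not_irreducible_C_inv_mul_pow_four_sub_C
    (by rw [natDegree_X_sq_sub_X_add_C]; norm_num) (by norm_num)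
end

section
/- Let $n \geq 1$ be an integer, $p$ a prime, and $\phi(x) \in \mathbb{Z}[x]$ a monic polynomial irreducible modulo $p$. Let $a_0(x), \dots, a_{n-1}(x) \in \mathbb{Z}[x]$ each have degree less than $\deg \phi(x)$, let $a_n$ be an integer with $p \nmid a_n$, and let $b_0, \dots, b_{n-1}$ be integers each divisible by $p$. Then the polynomial $F(x) = a_n \phi(x)^{2n} + \sum_{j=0}^{n-1} b_j a_j(x) \phi(x)^{2j}$ has no nonconstant factor in $\mathbb{Z}[x]$ of degree less than $\deg \phi(x)$. -/
/-!
Since `deg a_j < deg φ`, the leading coefficient of `F` is `a_n`, which is prime to `p`; hence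
so is the leading coefficient of any factor `d`, and reduction modulo `p` preserves `deg d`.
Modulo `p` all `b_j` vanish, so `F ≡ a_n φ^(2n)` and `d mod p` divides a power of the irreducible
`φ mod p`. Its degree is therefore a multiple of `deg φ`, which rules out `0 < deg d < deg φ`.
-/

open Polynomial

namespace Polynomial

section Semiring

variable {R : Type*} [Semiring R] {φ : R[X]} {m : ℕ}

theorem degree_mul_pow_lt {q : R[X]} {e : ℕ} (hq : q.natDegree < φ.natDegree) (he : e < m) :
    (q * φ ^ e).degree < ↑(m * φ.natDegree) := by
  refine degree_le_natDegree.trans_lt (WithBot.coe_lt_coe.2 ?_)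
  calc (q * φ ^ e).natDegree ≤ q.natDegree + e * φ.natDegree :=
        natDegree_mul_le.trans (Nat.add_le_add_left natDegree_pow_le _)
    _ < (e + 1) * φ.natDegree := by rw [Nat.succ_mul]; omega
    _ ≤ m * φ.natDegree := Nat.mul_le_mul_right _ he

theorem degree_sum_mul_pow_lt {ι : Type*} (s : Finset ι) (q : ι → R[X]) (e : ι → ℕ)
    (hq : ∀ i ∈ s, (q i).natDegree < φ.natDegree) (he : ∀ i ∈ s, e i < m) :
    (∑ i ∈ s, q i * φ ^ e i).degree < ↑(m * φ.natDegree) :=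
  (degree_sum_le _ _).trans_lt <| (Finset.sup_lt_iff (WithBot.bot_lt_coe _)).2
    fun i hi => degree_mul_pow_lt (hq i hi) (he i hi)

theorem leadingCoeff_C_mul_pow_add_of_degree_lt [NoZeroDivisors R] {c : R} (hc : c ≠ 0)
    (hφ : φ.Monic) {g : R[X]} (hg : g.degree < ↑(m * φ.natDegree)) :
    (C c * φ ^ m + g).leadingCoeff = c := by
  have : Nontrivial R := ⟨⟨c, 0, hc⟩⟩
  have hdeg : (C c * φ ^ m).degree = ↑(m * φ.natDegree) := by
    rw [degree_C_mul hc, degree_eq_natDegree (hφ.pow m).ne_zero, hφ.natDegree_pow]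
  rw [add_comm, leadingCoeff_add_of_degree_lt (hdeg ▸ hg), leadingCoeff_mul, leadingCoeff_C,
    (hφ.pow m).leadingCoeff, mul_one]

theorem natDegree_map_eq_of_dvd [NoZeroDivisors R] {S : Type*} [Semiring S] (ρ : R →+* S)
    {d f : R[X]} (hd : d ∣ f) (hf : ρ f.leadingCoeff ≠ 0) : (d.map ρ).natDegree = d.natDegree := by
  obtain ⟨e, rfl⟩ := hd
  rw [leadingCoeff_mul, map_mul] at hf
  exact natDegree_map_of_leadingCoeff_ne_zero ρ (left_ne_zero_of_mul hf)

end Semiring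

theorem natDegree_dvd_of_dvd_pow {K : Type*} [Field K] {ψ d : K[X]} {m : ℕ} (hψ : Irreducible ψ)
    (hd : d ∣ ψ ^ m) : ψ.natDegree ∣ d.natDegree := by
  obtain ⟨i, -, hi⟩ := (dvd_prime_pow hψ.prime m).1 hd
  rw [natDegree_eq_of_degree_eq (degree_eq_degree_of_associated hi), natDegree_pow]
  exact Dvd.intro_left i rfl

end Polynomial

theorem stmt_11_general (n : ℕ) (p : ℕ) (hp : p.Prime)
    (φ : ℤ[X]) (hmonic : φ.Monic)
    (hirr : Irreducible (φ.map (Int.castRingHom (ZMod p))))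
    (a : ℕ → ℤ[X]) (hdeg : ∀ i < n, (a i).natDegree < φ.natDegree)
    (an : ℤ) (han : ¬ ((p : ℤ) ∣ an))
    (b : ℕ → ℤ) (hb : ∀ j < n, (p : ℤ) ∣ b j) :
    ∀ d : ℤ[X], d ∣ (C an * φ ^ (2*n)
        + ∑ j ∈ Finset.range n, C (b j) * a j * φ ^ (2*j)) →
      0 < d.natDegree → d.natDegree < φ.natDegree → False := by
  intro d hdvd hd0 hdφ
  have : Fact p.Prime := ⟨hp⟩
  set ρ := Int.castRingHom (ZMod p)
  have hρan : ρ an ≠ 0 := mt (ZMod.intCast_zmod_eq_zero_iff_dvd _ _).1 han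
  set F := C an * φ ^ (2 * n) + ∑ j ∈ Finset.range n, C (b j) * a j * φ ^ (2 * j)
  have hlead : F.leadingCoeff = an := by
    refine leadingCoeff_C_mul_pow_add_of_degree_lt (by rintro rfl; exact han (dvd_zero _)) hmonic
      (degree_sum_mul_pow_lt _ _ _ (fun j hj => ?_) fun j hj => ?_)
    · exact (natDegree_C_mul_le _ _).trans_lt (hdeg j (Finset.mem_range.1 hj))
    · have := Finset.mem_range.1 hj; omega
  have hmod : F.map ρ = C (ρ an) * (φ.map ρ) ^ (2 * n) := by
    rw [Polynomial.map_add, Polynomial.map_sum, Finset.sum_eq_zero, add_zero]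
    · simp
    · intro j hj
      have hbj : ρ (b j) = 0 :=
        (ZMod.intCast_zmod_eq_zero_iff_dvd _ _).2 (hb j (Finset.mem_range.1 hj))
      rw [Polynomial.map_mul, Polynomial.map_mul, map_C, hbj, C_0, zero_mul, zero_mul]
  have hdvd_mod : d.map ρ ∣ (φ.map ρ) ^ (2 * n) :=
    (isUnit_C.2 hρan.isUnit).dvd_mul_left.1 (hmod ▸ Polynomial.map_dvd ρ hdvd)
  have hdiv := natDegree_dvd_of_dvd_pow hirr hdvd_mod
  rw [natDegree_map_eq_of_dvd ρ hdvd (by rwa [hlead]), hmonic.natDegree_map] at hdiv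
  exact Nat.not_dvd_of_pos_of_lt hd0 hdφ hdiv

theorem stmt_11 (n : ℕ) (hn : 1 ≤ n) (p : ℕ) (hp : p.Prime)
    (φ : ℤ[X]) (hmonic : φ.Monic)
    (hirr : Irreducible (φ.map (Int.castRingHom (ZMod p))))
    (a : ℕ → ℤ[X]) (hdeg : ∀ i < n, (a i).natDegree < φ.natDegree)
    (an : ℤ) (han : ¬ ((p : ℤ) ∣ an))
    (b : ℕ → ℤ) (hb : ∀ j < n, (p : ℤ) ∣ b j) :
    ∀ d : ℤ[X], d ∣ (C an * φ ^ (2*n)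
        + ∑ j ∈ Finset.range n, C (b j) * a j * φ ^ (2*j)) →
      0 < d.natDegree → d.natDegree < φ.natDegree → False :=
  stmt_11_general n p hp φ hmonic hirr a hdeg an han b hb
end

section
/- For integers $n > 2$, if $2n+1 \neq 25$, then at least one of the two numbers $2n+1, 2n+3$ is divisible by a prime $p > 5$. -/
/-!
If neither `2n+1` nor `2n+3` has a prime factor above 5, both are odd and 5-smooth, and since 3
and 5 each divide at most one of them, one is a power of 3 and the other a power of 5; hence
`3^y - 5^x = ±2`. For `y ≥ 4`, reducing modulo 81 gives `25^x ≡ 4`, which forces `x ≡ 20 (mod 27)`.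
As 3 and 5 both have order 27 modulo 109, this leaves `(3^r - 5^20)^2 ≡ 4 (mod 109)` for some
`r < 27`, which a finite check rules out. For `y ≤ 3` the solutions give the pairs
`(1, 3)`, `(3, 5)` and `(25, 27)`.
-/

open Polynomial

lemma abs_three_pow_sub_five_pow_ne_two {x y : ℕ} (hy : 4 ≤ y) : |(3 : ℤ) ^ y - 5 ^ x| ≠ 2 := by
  intro h
  have hsq : ((3 : ℤ) ^ y - 5 ^ x) ^ 2 = 4 := by rw [← sq_abs, h]; norm_num
  have hx : x % 27 = 20 := by
    have h81 := congrArg (Int.cast : ℤ → ZMod 81) hsq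
    push_cast at h81
    rw [← Nat.sub_add_cancel hy, pow_add, show (3 : ZMod 81) ^ 4 = 0 by decide, mul_zero,
      zero_sub, neg_sq, ← pow_mul, mul_comm, pow_mul,
      pow_eq_pow_mod x (show ((5 : ZMod 81) ^ 2) ^ 27 = 1 by decide)] at h81
    have key : ∀ r < 27, ((5 : ZMod 81) ^ 2) ^ r = 4 → r = 20 := by decide
    exact key _ (x.mod_lt (by norm_num)) h81
  have h109 := congrArg (Int.cast : ℤ → ZMod 109) hsq
  push_cast at h109
  rw [pow_eq_pow_mod y (show (3 : ZMod 109) ^ 27 = 1 by decide),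
    pow_eq_pow_mod x (show (5 : ZMod 109) ^ 27 = 1 by decide), hx] at h109
  have key : ∀ r < 27, ((3 : ZMod 109) ^ r - 5 ^ 20) ^ 2 ≠ 4 := by decide
  exact key _ (y.mod_lt (by norm_num)) h109

lemma three_pow_eq_five_pow_add_two_iff {b c : ℕ} :
    3 ^ c = 5 ^ b + 2 ↔ c = 1 ∧ b = 0 ∨ c = 3 ∧ b = 2 := by
  refine ⟨fun h => ?_, by rintro (⟨rfl, rfl⟩ | ⟨rfl, rfl⟩) <;> norm_num⟩
  have hc : c < 4 := by
    by_contra! hc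
    refine abs_three_pow_sub_five_pow_ne_two (x := b) hc ?_
    rw [show (3 : ℤ) ^ c = 5 ^ b + 2 by exact_mod_cast h]
    norm_num
  have hb : b < 3 := by
    by_contra! hb
    have h5 : 5 ^ 3 ≤ 5 ^ b := Nat.pow_le_pow_right (by norm_num) hb
    have h3 : 3 ^ c < 3 ^ 4 := Nat.pow_lt_pow_right (by norm_num) hc
    omega
  interval_cases c <;> interval_cases b <;> simp_all

lemma five_pow_eq_three_pow_add_two_iff {a d : ℕ} : 5 ^ d = 3 ^ a + 2 ↔ d = 1 ∧ a = 1 := by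
  refine ⟨fun h => ?_, by rintro ⟨rfl, rfl⟩; norm_num⟩
  have ha : a < 4 := by
    by_contra! ha
    refine abs_three_pow_sub_five_pow_ne_two (x := d) ha ?_
    rw [show (5 : ℤ) ^ d = 3 ^ a + 2 by exact_mod_cast h]
    norm_num
  have hd : d < 3 := by
    by_contra! hd
    have h5 : 5 ^ 3 ≤ 5 ^ d := Nat.pow_le_pow_right (by norm_num) hd
    have h3 : 3 ^ a < 3 ^ 4 := Nat.pow_lt_pow_right (by norm_num) ha
    omega
  interval_cases a <;> interval_cases d <;> simp_all

lemma eq_three_or_five_of_prime_dvd {m p : ℕ} (hm : Odd m) (hs : m ∈ Nat.smoothNumbers 6)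
    (hp : p.Prime) (hpm : p ∣ m) : p = 3 ∨ p = 5 := by
  have hp6 := Nat.mem_smoothNumbers'.mp hs p hp hpm
  have hp2 : p ≠ 2 := by
    rintro rfl
    exact Nat.not_even_iff_odd.mpr hm (even_iff_two_dvd.mpr hpm)
  have := hp.two_le
  interval_cases p <;> first | omega | exact absurd hp (by norm_num)

lemma eq_five_pow_of_not_three_dvd {m : ℕ} (hm : Odd m) (hs : m ∈ Nat.smoothNumbers 6)
    (h3 : ¬3 ∣ m) : ∃ b, m = 5 ^ b :=
  ⟨_, Nat.eq_prime_pow_of_unique_prime_dvd hs.1 fun hp hpm =>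
    (eq_three_or_five_of_prime_dvd hm hs hp hpm).resolve_left (by rintro rfl; exact h3 hpm)⟩

lemma eq_three_pow_of_not_five_dvd {m : ℕ} (hm : Odd m) (hs : m ∈ Nat.smoothNumbers 6)
    (h5 : ¬5 ∣ m) : ∃ a, m = 3 ^ a :=
  ⟨_, Nat.eq_prime_pow_of_unique_prime_dvd hs.1 fun hp hpm =>
    (eq_three_or_five_of_prime_dvd hm hs hp hpm).resolve_right (by rintro rfl; exact h5 hpm)⟩

theorem eq_one_or_three_or_twentyFive_of_mem_smoothNumbers {x : ℕ} (hx : Odd x)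
    (hs : x ∈ Nat.smoothNumbers 6) (hs' : x + 2 ∈ Nat.smoothNumbers 6) :
    x = 1 ∨ x = 3 ∨ x = 25 := by
  have hx' : Odd (x + 2) := hx.add_even even_two
  by_cases h3 : 3 ∣ x
  · obtain ⟨d, hd⟩ := eq_five_pow_of_not_three_dvd hx' hs' (by omega)
    have h5 : ¬5 ∣ x := fun h5 => by
      have hd0 : d ≠ 0 := by rintro rfl; omega
      have : 5 ∣ x + 2 := hd ▸ dvd_pow_self 5 hd0
      omega
    obtain ⟨a, rfl⟩ := eq_three_pow_of_not_five_dvd hx hs h5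
    obtain ⟨-, rfl⟩ := five_pow_eq_three_pow_add_two_iff.mp hd.symm
    omega
  · obtain ⟨b, rfl⟩ := eq_five_pow_of_not_three_dvd hx hs h3
    have h5 : ¬5 ∣ 5 ^ b + 2 := fun h5 => by
      rcases b with _ | b
      · omega
      · rw [pow_succ] at h5
        omega
    obtain ⟨c, hc⟩ := eq_three_pow_of_not_five_dvd hx' hs' h5
    rcases three_pow_eq_five_pow_add_two_iff.mp hc.symm with ⟨-, rfl⟩ | ⟨-, rfl⟩ <;> norm_num

theorem stmt_13 (n : ℕ) (hn : 2 < n) (h25 : 2*n+1 ≠ 25) :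
    ∃ p : ℕ, p.Prime ∧ 5 < p ∧ (p ∣ (2*n+1) ∨ p ∣ (2*n+3)) := by
  by_contra! h
  have hs : ∀ m, m = 2 * n + 1 ∨ m = 2 * n + 3 → m ∈ Nat.smoothNumbers 6 :=
    fun m hm => Nat.mem_smoothNumbers'.mpr fun p hp hpm => by
      by_contra! hp6
      rcases hm with rfl | rfl
      exacts [(h p hp (by omega)).1 hpm, (h p hp (by omega)).2 hpm]
  rcases eq_one_or_three_or_twentyFive_of_mem_smoothNumbers (odd_two_mul_add_one n)
    (hs _ (.inl rfl)) (hs _ (.inr rfl)) with h | h | h <;> omega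
end
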